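/- Let G be a DAG with edge weights, b ≥ 1, r ≥ 0, and suppose every vertex can reach t. Define d : V → ℝ∪{∞} by d(t) = 0 and d(u) = min over out-neighbors v of u with b·w(uv) + d(v) ≤ r of (w(uv) + d(v)), with d(u) = ∞ if no such neighbor exists. Then for every vertex u, d(u) equals the minimum total weight of a motivating u-t path in G (and d(u) = ∞ if and only if no motivating u-t path exists). -/

import Mathlib

variable {V : Type*}

/-- Total weight of a walk given as its list of vertices. -/
def cost (w : V → V → ℝ) : List V → ℝ
  | u :: v :: rest => w u v + cost w (v :: rest)
  | _ => 0

/-- Perceived cost of a walk for an agent with salience factor `b`: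
the first edge is scaled by `b`. -/
def perceived (b : ℝ) (w : V → V → ℝ) : List V → ℝ
  | u :: v :: rest => b * w u v + cost w (v :: rest)
  | _ => 0

/-- `p` is a path (walk) in the digraph `E` ending at `t`. -/
def IsPathTo (E : V → V → Prop) (t : V) (p : List V) : Prop :=
  p.Chain' E ∧ p.getLast? = some t

/-- Perceived cost from `u` to the target `t`:
the infimum of perceived costs of `u`-`t` paths. -/
noncomputable def zeta (E : V → V → Prop) (w : V → V → ℝ) (b : ℝ) (t u : V) : ℝ :=
  sInf {c | ∃ p : List V, IsPathTo E t (u :: p) ∧ perceived b w (u :: p) = c}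

/-- Shortest-path distance from `u` to `t`. -/
noncomputable def distTo (E : V → V → Prop) (w : V → V → ℝ) (t u : V) : ℝ :=
  sInf {c | ∃ p : List V, IsPathTo E t (u :: p) ∧ cost w (u :: p) = c}

/-- One step of the present-biased agent: at `u` it does not abandon
(`ζ(u) ≤ r`) and moves to `v`, the second vertex of some `u`-`t` path of
minimum perceived cost. -/
noncomputable def Step (E : V → V → Prop) (w : V → V → ℝ) (b r : ℝ) (t u v : V) : Prop :=
  zeta E w b t u ≤ r ∧
    ∃ p : List V, IsPathTo E t (u :: v :: p) ∧ perceived b w (u :: v :: p) = zeta E w b t u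

/-- The instance is motivating: whenever the agent, having walked from `s`
following `Step`, finds itself at a vertex `u ≠ t`, it can take another step
(so it never abandons before reaching `t`). -/
noncomputable def Motivating (E : V → V → Prop) (w : V → V → ℝ) (b r : ℝ) (s t : V) : Prop :=
  ∀ (q : List V) (u : V), q.head? = some s → q.Chain' (Step E w b r t) →
    q.getLast? = some u → u ≠ t → ∃ v, Step E w b r t u v

/-- A walk is motivating for salience `b` and reward `r` if at every vertex
along it, the perceived cost of the remainder is at most `r`. -/
def MotivWalk (w : V → V → ℝ) (b r : ℝ) : List V → Prop
  | u :: v :: rest => b * w u v + cost w (v :: rest) ≤ r ∧ MotivWalk w b r (v :: rest)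
  | _ => True

/-!
A rank function strictly increasing along edges makes every walk a simple path, so a vertex
has only finitely many paths to `t`, and `t` only the trivial one. A motivating path from
`u ≠ t` is an edge `uv` followed by a motivating `v`-`t` path `q` with `b·w(uv) + cost q ≤ r`.
Because the minimal cost at `v` is attained by such a `q`, the constraint `b·w(uv) + d v ≤ r`
of the recursion is met by an actual path, and the minimal costs satisfy the recursion
defining `d`. Well-founded induction along reversed edges then identifies the two.
-/

section Paths

variable {E : V → V → Prop} {t u v : V}

theorem isPathTo_singleton : IsPathTo E t [u] ↔ u = t :=
  ⟨fun h => Option.some.inj h.2, fun h => ⟨List.isChain_singleton u, by simp [h]⟩⟩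

theorem isPathTo_cons_cons {p : List V} :
    IsPathTo E t (u :: v :: p) ↔ E u v ∧ IsPathTo E t (v :: p) :=
  ⟨fun ⟨hc, hl⟩ => ⟨(List.isChain_cons_cons.1 hc).1, (List.isChain_cons_cons.1 hc).2,
      by simpa using hl⟩,
    fun ⟨huv, hc, hl⟩ => ⟨List.isChain_cons_cons.2 ⟨huv, hc⟩, by simpa using hl⟩⟩

variable {f : V → ℕ}

theorem List.IsChain.nodup_of_rank (hf : ∀ u v, E u v → f u < f v) {l : List V}
    (hl : l.IsChain E) : l.Nodup :=
  (List.isChain_iff_pairwise.1 (hl.imp hf)).imp fun h he => (he ▸ h).false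

theorem IsPathTo.eq_nil_of_rank (hf : ∀ u v, E u v → f u < f v) {p : List V}
    (hp : IsPathTo E t (t :: p)) : p = [] := by
  cases p with
  | nil => rfl
  | cons v p =>
    have hlast : (v :: p).getLast? = some t := by simpa using hp.2
    exact absurd (List.mem_of_getLast? hlast) (List.nodup_cons.1 (hp.1.nodup_of_rank hf)).1

theorem wellFounded_of_rank [Finite V] (hf : ∀ u v, E u v → f u < f v) :
    WellFounded (flip E) := by
  obtain ⟨M, hM⟩ := (Set.finite_range f).bddAbove
  refine Subrelation.wf (fun {v u} (huv : E u v) => ?_) (measure fun v => M - f v).wf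
  have := hf u v huv
  have := hM (Set.mem_range_self v)
  show M - f v < M - f u
  omega

theorem finite_setOf_isPathTo [Finite V] (hf : ∀ u v, E u v → f u < f v) :
    {p : List V | IsPathTo E t (u :: p)}.Finite :=
  (List.finite_length_le V (Nat.card V)).subset fun _ hp =>
    Nat.le_of_succ_le ((hp.1.nodup_of_rank hf).length_le_natCard)

end Paths

def motivCosts (E : V → V → Prop) (w : V → V → ℝ) (b r : ℝ) (t u : V) : Set EReal :=
  {x | ∃ p : List V, IsPathTo E t (u :: p) ∧ MotivWalk w b r (u :: p) ∧
    x = (cost w (u :: p) : EReal)}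

section MotivCosts

variable {E : V → V → Prop} {w : V → V → ℝ} {b r : ℝ} {t u : V} {f : V → ℕ}

theorem motivCosts_target (hf : ∀ u v, E u v → f u < f v) : motivCosts E w b r t t = {0} := by
  ext x
  constructor
  · rintro ⟨p, hp, -, rfl⟩
    obtain rfl := hp.eq_nil_of_rank hf
    simp [cost]
  · rintro rfl
    exact ⟨[], isPathTo_singleton.2 rfl, trivial, by simp [cost]⟩

theorem motivCosts_finite [Finite V] (hf : ∀ u v, E u v → f u < f v) :
    (motivCosts E w b r t u).Finite :=
  ((finite_setOf_isPathTo hf).image fun p => (cost w (u :: p) : EReal)).subset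
    fun _ ⟨p, hp, _, hx⟩ => ⟨p, hp, hx.symm⟩

theorem sInf_motivCosts_eq_top_iff : sInf (motivCosts E w b r t u) = ⊤ ↔
    ¬ ∃ p : List V, IsPathTo E t (u :: p) ∧ MotivWalk w b r (u :: p) := by
  rw [sInf_eq_top]
  constructor
  · rintro h ⟨p, hp, hm⟩
    exact EReal.coe_ne_top _ (h _ ⟨p, hp, hm, rfl⟩)
  · rintro h _ ⟨p, hp, hm, rfl⟩
    exact absurd ⟨p, hp, hm⟩ h

theorem mem_motivCosts_of_ne (hut : u ≠ t) {x : EReal} :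
    x ∈ motivCosts E w b r t u ↔ ∃ v, E u v ∧ ∃ c ∈ motivCosts E w b r t v,
      (b : EReal) * (w u v : EReal) + c ≤ (r : EReal) ∧ x = (w u v : EReal) + c := by
  constructor
  · rintro ⟨_ | ⟨v, p⟩, hp, hm, rfl⟩
    · exact absurd (isPathTo_singleton.1 hp) hut
    obtain ⟨huv, hp⟩ := isPathTo_cons_cons.1 hp
    exact ⟨v, huv, _, ⟨p, hp, hm.2, rfl⟩, by exact_mod_cast hm.1, rfl⟩
  · rintro ⟨v, huv, _, ⟨p, hp, hm, rfl⟩, hle, rfl⟩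
    exact ⟨v :: p, isPathTo_cons_cons.2 ⟨huv, hp⟩, ⟨by exact_mod_cast hle, hm⟩, rfl⟩

theorem sInf_motivCosts_eq_of_ne [Finite V] (hf : ∀ u v, E u v → f u < f v) (hut : u ≠ t)
    {d : V → EReal} (hd : ∀ v, E u v → d v = sInf (motivCosts E w b r t v)) :
    sInf {x : EReal | ∃ v, E u v ∧ (b : EReal) * (w u v : EReal) + d v ≤ (r : EReal) ∧
      x = (w u v : EReal) + d v} = sInf (motivCosts E w b r t u) := by
  refine le_antisymm (le_sInf fun x hx => ?_) (le_sInf fun x ⟨v, huv, hle, hx⟩ => ?_)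
  · obtain ⟨v, huv, c, hc, hle, rfl⟩ := (mem_motivCosts_of_ne hut).1 hx
    have hdc : d v ≤ c := hd v huv ▸ sInf_le hc
    exact sInf_le_of_le ⟨v, huv, le_trans (by gcongr) hle, rfl⟩ (by gcongr)
  · have hne : (motivCosts E w b r t v).Nonempty := by
      rw [Set.nonempty_iff_ne_empty]
      intro hempty
      have hbw : (b : EReal) * (w u v : EReal) ≠ ⊥ := by
        exact_mod_cast EReal.coe_ne_bot (b * w u v)
      simp [hd v huv, hempty, EReal.add_top_of_ne_bot hbw] at hle
    have hmem : d v ∈ motivCosts E w b r t v :=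
      hd v huv ▸ hne.csInf_mem (motivCosts_finite hf)
    exact sInf_le ((mem_motivCosts_of_ne hut).2 ⟨v, huv, d v, hmem, hle, hx⟩)

end MotivCosts

theorem stmt_14_general [Fintype V] (E : V → V → Prop) (w : V → V → ℝ) (b r : ℝ) (t : V)
    (hdag : ∃ f : V → ℕ, ∀ u v, E u v → f u < f v)
    (d : V → EReal) (hdt : d t = 0)
    (hd : ∀ u, u ≠ t → d u =
      sInf {x : EReal | ∃ v, E u v ∧ (b : EReal) * (w u v : EReal) + d v ≤ (r : EReal) ∧
        x = (w u v : EReal) + d v}) :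
    ∀ u : V,
      d u = sInf {x : EReal | ∃ p : List V, IsPathTo E t (u :: p) ∧
          MotivWalk w b r (u :: p) ∧ x = (cost w (u :: p) : EReal)} ∧
      (d u = ⊤ ↔ ¬ ∃ p : List V, IsPathTo E t (u :: p) ∧ MotivWalk w b r (u :: p)) := by
  obtain ⟨f, hf⟩ := hdag
  have hdS (u : V) : d u = sInf (motivCosts E w b r t u) := by
    induction u using (wellFounded_of_rank hf).induction with | _ u ih
    by_cases hut : u = t
    · rw [hut, hdt, motivCosts_target hf, sInf_singleton]
    · rw [hd u hut, sInf_motivCosts_eq_of_ne hf hut ih]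
  exact fun u => ⟨hdS u, hdS u ▸ sInf_motivCosts_eq_top_iff⟩

/-- The dynamic-programming values `d` (with `d t = 0` and
`d u = min over out-neighbours v with b·w(uv) + d(v) ≤ r of (w(uv) + d(v))`,
`∞` if no such neighbour exists) equal, at every vertex `u`, the minimum total
weight of a motivating `u`-`t` path, with `d u = ∞` iff no motivating `u`-`t`
path exists. -/
theorem stmt_14 [Fintype V] (E : V → V → Prop) (w : V → V → ℝ) (b r : ℝ) (t : V)
    (hb : 1 ≤ b) (hr : 0 ≤ r) (hw : ∀ u v, 0 ≤ w u v)
    (hdag : ∃ f : V → ℕ, ∀ u v, E u v → f u < f v)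
    (hreach : ∀ u : V, ∃ p : List V, IsPathTo E t (u :: p))
    (d : V → EReal) (hdt : d t = 0)
    (hd : ∀ u, u ≠ t → d u =
      sInf {x : EReal | ∃ v, E u v ∧ (b : EReal) * (w u v : EReal) + d v ≤ (r : EReal) ∧
        x = (w u v : EReal) + d v}) :
    ∀ u : V,
      d u = sInf {x : EReal | ∃ p : List V, IsPathTo E t (u :: p) ∧
          MotivWalk w b r (u :: p) ∧ x = (cost w (u :: p) : EReal)} ∧
      (d u = ⊤ ↔ ¬ ∃ p : List V, IsPathTo E t (u :: p) ∧ MotivWalk w b r (u :: p)) :=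
  stmt_14_general E w b r t hdag d hdt hd
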